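/- Let X, Y, Z, U, V, W be finite-valued random variables with (U,V,W) → X → (Y,Z) a Markov chain, and suppose I(X';Y') ≥ I(X';Z') for every input distribution of the channel (Y is more capable than Z), meaning in particular I(X;Y|A) ≥ I(X;Z|A) for any A with A → X → (Y,Z). Then for every λ ∈ [0,1], λ I(W;Y) + (1−λ) I(W;Z) + I(U;Y|W) + I(V;Z|W) − I(U;V|W) ≤ max over W' with W' → X → (Y,Z), W' having the same X-marginal, of [λ I(W';Y) + (1−λ) I(W';Z) + I(X;Y|W')] = I(X;Y) + (1−λ) max_{W'} (I(W';Z) − I(W';Y)). -/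

import Mathlib

open scoped BigOperators Classical

noncomputable section

/-- Probability that the random variable `f` takes the value `a` under the pmf `μ`. -/
def prob {Ω A : Type*} [Fintype Ω] (μ : Ω → ℝ) (f : Ω → A) (a : A) : ℝ :=
  ∑ ω, if f ω = a then μ ω else 0

/-- Shannon entropy (natural log) of the finite-valued random variable `f`. -/
def ent {Ω A : Type*} [Fintype Ω] [Fintype A] (μ : Ω → ℝ) (f : Ω → A) : ℝ :=
  ∑ a, Real.negMulLog (prob μ f a)

/-- Conditional entropy `H(f | g)`. -/
def condEnt {Ω A B : Type*} [Fintype Ω] [Fintype A] [Fintype B]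
    (μ : Ω → ℝ) (f : Ω → A) (g : Ω → B) : ℝ :=
  ent μ (fun ω => (f ω, g ω)) - ent μ g

/-- Mutual information `I(f ; g)`. -/
def mutInfo {Ω A B : Type*} [Fintype Ω] [Fintype A] [Fintype B]
    (μ : Ω → ℝ) (f : Ω → A) (g : Ω → B) : ℝ :=
  ent μ f + ent μ g - ent μ (fun ω => (f ω, g ω))

/-- Conditional mutual information `I(f ; g | h)`. -/
def condMutInfo {Ω A B C : Type*} [Fintype Ω] [Fintype A] [Fintype B] [Fintype C]
    (μ : Ω → ℝ) (f : Ω → A) (g : Ω → B) (h : Ω → C) : ℝ :=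
  ent μ (fun ω => (f ω, h ω)) + ent μ (fun ω => (g ω, h ω))
    - ent μ (fun ω => (f ω, g ω, h ω)) - ent μ h

/-- `f → g → h` is a Markov chain under `μ`. -/
def IsMarkov {Ω A B C : Type*} [Fintype Ω] (μ : Ω → ℝ)
    (f : Ω → A) (g : Ω → B) (h : Ω → C) : Prop :=
  ∀ (a : A) (b : B) (c : C),
    prob μ (fun ω => (f ω, g ω, h ω)) (a, b, c) * prob μ g b
      = prob μ (fun ω => (f ω, g ω)) (a, b) * prob μ (fun ω => (g ω, h ω)) (b, c)

/-- A pmf: nonnegative and summing to one. -/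
def IsPmf {Ω : Type*} [Fintype Ω] (μ : Ω → ℝ) : Prop :=
  (∀ ω, 0 ≤ μ ω) ∧ ∑ ω, μ ω = 1

/-!
Expanded over the pmf on `Ω`, conditional mutual information is a Kullback–Leibler divergence,
hence nonnegative (Gibbs), and it vanishes along Markov chains. By the chain rule,
`I(V;Z|W) - I(U;V|W) ≤ I(V;Z|U,W) ≤ I(X;Z|U,W)`, the second step because `V → (X,U,W) → Z`;
the more-capable hypothesis bounds this by `I(X;Y|U,W) = I(X;Y|W) - I(U;Y|W)`. So the sum-rate
expression is at most the superposition objective at `W' = W`. For every admissible `W'`,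
`I(X;Y|W') = I(X;Y) - I(W';Y)`, so the objective is the increasing affine image
`I(X;Y) + (1-λ) v` of `v = I(W';Z) - I(W';Y) ≤ I(X;Z)`, and such a map commutes with `sSup`.
-/
section

variable {Ω A B C D : Type*} [Fintype Ω] {μ : Ω → ℝ}

section Prob

lemma prob_apply_pos (hμ : IsPmf μ) (f : Ω → A) {ω : Ω} (hω : 0 < μ ω) :
    0 < prob μ f (f ω) :=
  hω.trans_le <| by
    unfold prob
    simpa using Finset.single_le_sum (f := fun ω' => if f ω' = f ω then μ ω' else 0)
      (fun ω' _ => by split_ifs <;> simp [hμ.1 ω']) (Finset.mem_univ ω)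

lemma prob_nonneg (hμ : IsPmf μ) (f : Ω → A) (a : A) : 0 ≤ prob μ f a :=
  Finset.sum_nonneg fun ω _ => by split_ifs <;> simp [hμ.1 ω]

lemma prob_comp_of_injective {e : A → B} (he : Function.Injective e) (f : Ω → A) (a : A) :
    prob μ (fun ω => e (f ω)) (e a) = prob μ f a := by
  simp [prob, he.eq_iff]

lemma prob_le_prob_comp (hμ : IsPmf μ) (f : Ω → A) (e : A → B) (a : A) :
    prob μ f a ≤ prob μ (fun ω => e (f ω)) (e a) :=
  Finset.sum_le_sum fun ω _ => by
    by_cases h : f ω = a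
    · simp [h]
    · rw [if_neg h]
      split_ifs <;> simp [hμ.1 ω]

lemma sum_prob_mul [Fintype A] (f : Ω → A) (F : A → ℝ) :
    ∑ a, prob μ f a * F a = ∑ ω, μ ω * F (f ω) := by
  simp only [prob, Finset.sum_mul, ite_mul, zero_mul]
  rw [Finset.sum_comm]
  simp

lemma sum_prob (hμ : IsPmf μ) [Fintype A] (f : Ω → A) : ∑ a, prob μ f a = 1 := by
  simpa [hμ.2] using sum_prob_mul (μ := μ) f (fun _ => 1)

lemma sum_prob_pair_fst [Fintype A] (f : Ω → A) (g : Ω → B) (b : B) :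
    ∑ a, prob μ (fun ω => (f ω, g ω)) (a, b) = prob μ g b := by
  simp only [prob, Prod.mk.injEq, ite_and]
  rw [Finset.sum_comm]
  simp

lemma prob_pair_comp_fst [Fintype A] (e : A → D) (f : Ω → A) (g : Ω → B) (d : D) (b : B) :
    prob μ (fun ω => (e (f ω), g ω)) (d, b)
      = ∑ a, if e a = d then prob μ (fun ω => (f ω, g ω)) (a, b) else 0 := by
  simp only [prob, Prod.mk.injEq, ite_and, Finset.ite_sum_zero]
  rw [Finset.sum_comm]
  refine Finset.sum_congr rfl fun ω _ => ?_
  rw [Fintype.sum_eq_single (f ω) fun a ha => by simp [Ne.symm ha]]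
  simp

end Prob

namespace IsMarkov

variable {f : Ω → A} {g : Ω → B} {h : Ω → C}

lemma symm (hm : IsMarkov μ f g h) : IsMarkov μ h g f := by
  intro c b a
  have hhgf : prob μ (fun ω => (h ω, g ω, f ω)) (c, b, a)
      = prob μ (fun ω => (f ω, g ω, h ω)) (a, b, c) :=
    prob_comp_of_injective (e := fun x : A × B × C => (x.2.2, x.2.1, x.1))
      (fun _ _ hx => by simp_all [Prod.ext_iff]) (fun ω => (f ω, g ω, h ω)) (a, b, c)
  rw [hhgf, hm, ← prob_comp_of_injective Prod.swap_injective (fun ω => (f ω, g ω)),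
    ← prob_comp_of_injective Prod.swap_injective (fun ω => (g ω, h ω))]
  exact mul_comm _ _

lemma comp_left [Fintype A] (hm : IsMarkov μ f g h) (e : A → D) :
    IsMarkov μ (fun ω => e (f ω)) g h := by
  intro d b c
  rw [prob_pair_comp_fst e f (fun ω => (g ω, h ω)), prob_pair_comp_fst e f g,
    Finset.sum_mul, Finset.sum_mul]
  refine Finset.sum_congr rfl fun a _ => ?_
  split_ifs
  · exact hm a b c
  · simp

lemma comp_right [Fintype C] (hm : IsMarkov μ f g h) (e : C → D) :
    IsMarkov μ f g (fun ω => e (h ω)) :=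
  (hm.symm.comp_left e).symm

lemma weak_union [Fintype A] [Fintype D] (hμ : IsPmf μ) {f' : Ω → D}
    (hm : IsMarkov μ (fun ω => (f ω, f' ω)) g h) :
    IsMarkov μ f (fun ω => (g ω, f' ω)) h := by
  have hm' : IsMarkov μ f' g h := hm.comp_left Prod.snd
  rintro a ⟨b, d⟩ c
  have h₁ : prob μ (fun ω => (f ω, (g ω, f' ω), h ω)) (a, (b, d), c)
      = prob μ (fun ω => ((f ω, f' ω), g ω, h ω)) ((a, d), b, c) :=
    prob_comp_of_injective (e := fun x : (A × D) × B × C => (x.1.1, (x.2.1, x.1.2), x.2.2))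
      (fun _ _ hx => by simp_all [Prod.ext_iff]) (fun ω => ((f ω, f' ω), g ω, h ω))
      ((a, d), b, c)
  have h₂ : prob μ (fun ω => (g ω, f' ω)) (b, d) = prob μ (fun ω => (f' ω, g ω)) (d, b) :=
    prob_comp_of_injective Prod.swap_injective (fun ω => (f' ω, g ω)) (d, b)
  have h₃ : prob μ (fun ω => (f ω, (g ω, f' ω))) (a, (b, d))
      = prob μ (fun ω => ((f ω, f' ω), g ω)) ((a, d), b) :=
    prob_comp_of_injective (e := fun x : (A × D) × B => (x.1.1, (x.2, x.1.2)))
      (fun _ _ hx => by simp_all [Prod.ext_iff]) (fun ω => ((f ω, f' ω), g ω))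
      ((a, d), b)
  have h₄ : prob μ (fun ω => ((g ω, f' ω), h ω)) ((b, d), c)
      = prob μ (fun ω => (f' ω, g ω, h ω)) (d, b, c) :=
    prob_comp_of_injective (e := fun x : D × B × C => ((x.2.1, x.1), x.2.2))
      (fun _ _ hx => by simp_all [Prod.ext_iff]) (fun ω => (f' ω, g ω, h ω))
      (d, b, c)
  rw [h₁, h₂, h₃, h₄]
  -- Multiply by `P(g = b)` and use both Markov identities; if `P(g = b) = 0` both sides vanish.
  rcases (prob_nonneg hμ g b).eq_or_lt with hb | hb
  · have hfgh := prob_le_prob_comp hμ (fun ω => ((f ω, f' ω), g ω, h ω)) (·.2.1) ((a, d), b, c)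
    have hfg := prob_le_prob_comp hμ (fun ω => ((f ω, f' ω), g ω)) Prod.snd ((a, d), b)
    simp only [← hb] at hfgh hfg
    rw [le_antisymm hfgh (prob_nonneg hμ _ _), le_antisymm hfg (prob_nonneg hμ _ _)]
    ring
  · refine mul_right_cancel₀ hb.ne' ?_
    linear_combination prob μ (fun ω => (f' ω, g ω)) (d, b) * hm (a, d) b c
      - prob μ (fun ω => ((f ω, f' ω), g ω)) ((a, d), b) * hm' d b c

end IsMarkov

section Entropy

/-- Gibbs' inequality, for a sub-probability `Q` charging every atom of `t`. -/
lemma sum_mul_log_sub_log_nonneg {T : Type*} [Fintype T] (hμ : IsPmf μ) (t : Ω → T)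
    (Q : T → ℝ) (hQ : ∀ x, 0 ≤ Q x) (hQ_sum : ∑ x, Q x ≤ 1)
    (hQ_pos : ∀ ω, 0 < μ ω → 0 < Q (t ω)) :
    0 ≤ ∑ ω, μ ω * (Real.log (prob μ t (t ω)) - Real.log (Q (t ω))) := by
  have hterm : ∀ ω, μ ω - μ ω * (Q (t ω) / prob μ t (t ω))
      ≤ μ ω * (Real.log (prob μ t (t ω)) - Real.log (Q (t ω))) := by
    intro ω
    rcases (hμ.1 ω).eq_or_lt with h0 | hpos
    · simp [← h0]
    have hP := prob_apply_pos hμ t hpos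
    have hlog := Real.log_le_sub_one_of_pos (div_pos (hQ_pos ω hpos) hP)
    rw [Real.log_div (hQ_pos ω hpos).ne' hP.ne'] at hlog
    nlinarith
  have hratio : ∑ ω, μ ω * (Q (t ω) / prob μ t (t ω)) ≤ 1 := by
    rw [← sum_prob_mul t fun x => Q x / prob μ t x]
    refine le_trans (Finset.sum_le_sum fun x _ => ?_) hQ_sum
    rcases (prob_nonneg hμ t x).eq_or_lt with h0 | hpos
    · simp [← h0, hQ x]
    · rw [mul_div_cancel₀ _ hpos.ne']
  calc (0 : ℝ) ≤ ∑ ω, μ ω - ∑ ω, μ ω * (Q (t ω) / prob μ t (t ω)) := by linarith [hμ.2]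
    _ ≤ _ := by rw [← Finset.sum_sub_distrib]; exact Finset.sum_le_sum fun ω _ => hterm ω

variable [Fintype A] [Fintype B] [Fintype C] [Fintype D]

lemma ent_eq_sum (f : Ω → A) : ent μ f = -∑ ω, μ ω * Real.log (prob μ f (f ω)) := by
  rw [← sum_prob_mul f fun a => Real.log (prob μ f a)]
  simp [ent, Real.negMulLog]

lemma ent_comp_of_injective {e : A → B} (he : Function.Injective e) (f : Ω → A) :
    ent μ (fun ω => e (f ω)) = ent μ f := by
  simp only [ent_eq_sum, prob_comp_of_injective he]

lemma condMutInfo_eq_sum (f : Ω → A) (g : Ω → B) (h : Ω → C) :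
    condMutInfo μ f g h = ∑ ω, μ ω *
      (Real.log (prob μ (fun ω => (f ω, g ω, h ω)) (f ω, g ω, h ω)) + Real.log (prob μ h (h ω))
        - Real.log (prob μ (fun ω => (f ω, h ω)) (f ω, h ω))
        - Real.log (prob μ (fun ω => (g ω, h ω)) (g ω, h ω))) := by
  simp only [condMutInfo, ent_eq_sum, mul_add, mul_sub, Finset.sum_add_distrib,
    Finset.sum_sub_distrib]
  ring

/-- `p(a, c) p(b, c) / p(c)` is the law making `f` and `g` conditionally independent given `h`. -/
lemma sum_prob_pair_mul_div (hμ : IsPmf μ) (f : Ω → A) (g : Ω → B) (h : Ω → C) :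
    ∑ x : A × B × C, prob μ (fun ω => (f ω, h ω)) (x.1, x.2.2)
      * prob μ (fun ω => (g ω, h ω)) (x.2.1, x.2.2) / prob μ h x.2.2 = 1 := by
  simp only [Fintype.sum_prod_type]
  rw [Finset.sum_comm]
  simp_rw [Finset.sum_comm (γ := A)]
  rw [Finset.sum_comm]
  simp_rw [← Finset.sum_div, ← Finset.sum_mul, ← Finset.mul_sum, sum_prob_pair_fst,
    mul_self_div_self]
  exact sum_prob hμ h

lemma condMutInfo_nonneg (hμ : IsPmf μ) (f : Ω → A) (g : Ω → B) (h : Ω → C) :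
    0 ≤ condMutInfo μ f g h := by
  rw [condMutInfo_eq_sum]
  refine (sum_mul_log_sub_log_nonneg hμ (fun ω => (f ω, g ω, h ω))
    (fun x => prob μ (fun ω => (f ω, h ω)) (x.1, x.2.2)
      * prob μ (fun ω => (g ω, h ω)) (x.2.1, x.2.2) / prob μ h x.2.2)
    (fun x => div_nonneg (mul_nonneg (prob_nonneg hμ _ _) (prob_nonneg hμ _ _))
      (prob_nonneg hμ _ _))
    (sum_prob_pair_mul_div hμ f g h).le fun ω hω => ?_).trans_eq
    (Finset.sum_congr rfl fun ω _ => ?_)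
  · have := prob_apply_pos hμ (fun ω => (f ω, h ω)) hω
    have := prob_apply_pos hμ (fun ω => (g ω, h ω)) hω
    have := prob_apply_pos hμ h hω
    positivity
  · rcases (hμ.1 ω).eq_or_lt with h0 | hω
    · simp [← h0]
    have h₁ := prob_apply_pos hμ (fun ω => (f ω, h ω)) hω
    have h₂ := prob_apply_pos hμ (fun ω => (g ω, h ω)) hω
    have h₃ := prob_apply_pos hμ h hω
    dsimp only
    rw [Real.log_div (by positivity) h₃.ne', Real.log_mul h₁.ne' h₂.ne']
    ring

lemma condMutInfo_eq_zero_of_isMarkov (hμ : IsPmf μ) {f : Ω → A} {g : Ω → B} {h : Ω → C}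
    (hm : IsMarkov μ f g h) : condMutInfo μ f h g = 0 := by
  rw [condMutInfo_eq_sum]
  refine Finset.sum_eq_zero fun ω _ => ?_
  rcases (hμ.1 ω).eq_or_lt with h0 | hω
  · simp [← h0]
  have hfhg : prob μ (fun ω => (f ω, h ω, g ω)) (f ω, h ω, g ω)
      = prob μ (fun ω => (f ω, g ω, h ω)) (f ω, g ω, h ω) :=
    prob_comp_of_injective (e := fun x : A × B × C => (x.1, x.2.2, x.2.1))
      (fun _ _ hx => by simp_all [Prod.ext_iff]) (fun ω => (f ω, g ω, h ω)) (f ω, g ω, h ω)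
  have hhg : prob μ (fun ω => (h ω, g ω)) (h ω, g ω)
      = prob μ (fun ω => (g ω, h ω)) (g ω, h ω) :=
    prob_comp_of_injective Prod.swap_injective (fun ω => (g ω, h ω)) (g ω, h ω)
  have hfgh := prob_apply_pos hμ (fun ω => (f ω, g ω, h ω)) hω
  have hfg := prob_apply_pos hμ (fun ω => (f ω, g ω)) hω
  have hgh := prob_apply_pos hμ (fun ω => (g ω, h ω)) hω
  have hg := prob_apply_pos hμ g hω
  rw [hfhg, hhg, ← Real.log_mul hfgh.ne' hg.ne', hm, Real.log_mul hfg.ne' hgh.ne']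
  ring

lemma ent_triple_comm (f : Ω → A) (g : Ω → B) (h : Ω → C) :
    ent μ (fun ω => (f ω, g ω, h ω)) = ent μ (fun ω => (g ω, f ω, h ω)) :=
  ent_comp_of_injective (e := fun x : B × A × C => (x.2.1, x.1, x.2.2))
    (fun _ _ hx => by simp_all [Prod.ext_iff]) (fun ω => (g ω, f ω, h ω))

lemma ent_const (hμ : IsPmf μ) : ent μ (fun _ : Ω => ()) = 0 := by
  simp [ent, prob, hμ.2]

lemma ent_pair_const (f : Ω → A) : ent μ (fun ω => (f ω, ())) = ent μ f :=
  ent_comp_of_injective (e := fun a : A => (a, ())) (fun _ _ hx => congrArg Prod.fst hx) f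

lemma ent_triple_const (f : Ω → A) (g : Ω → B) :
    ent μ (fun ω => (f ω, g ω, ())) = ent μ (fun ω => (f ω, g ω)) :=
  ent_comp_of_injective (e := fun x : A × B => (x.1, x.2, ()))
    (fun _ _ hx => by simp_all [Prod.ext_iff]) (fun ω => (f ω, g ω))

lemma ent_pair_comm (f : Ω → A) (g : Ω → B) :
    ent μ (fun ω => (f ω, g ω)) = ent μ (fun ω => (g ω, f ω)) :=
  ent_comp_of_injective Prod.swap_injective (fun ω => (g ω, f ω))

lemma condMutInfo_comm (f : Ω → A) (g : Ω → B) (h : Ω → C) :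
    condMutInfo μ f g h = condMutInfo μ g f h := by
  rw [condMutInfo, condMutInfo, ent_triple_comm]
  ring

lemma condMutInfo_const (hμ : IsPmf μ) (f : Ω → A) (g : Ω → B) :
    condMutInfo μ f g (fun _ => ()) = mutInfo μ f g := by
  rw [condMutInfo, mutInfo, ent_pair_const, ent_pair_const,
    ent_triple_const, ent_const hμ, sub_zero]

lemma mutInfo_nonneg (hμ : IsPmf μ) (f : Ω → A) (g : Ω → B) : 0 ≤ mutInfo μ f g :=
  condMutInfo_const hμ f g ▸ condMutInfo_nonneg hμ f g _

lemma mutInfo_comp_left_of_injective {e : A → D} (he : Function.Injective e)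
    (f : Ω → A) (g : Ω → B) : mutInfo μ (fun ω => e (f ω)) g = mutInfo μ f g := by
  rw [mutInfo, mutInfo, ent_comp_of_injective he,
    ent_comp_of_injective (e := fun x : A × B => (e x.1, x.2)) (he.prodMap Function.injective_id)
      (fun ω => (f ω, g ω))]

lemma condMutInfo_comp_cond_of_injective {e : C → D} (he : Function.Injective e)
    (f : Ω → A) (g : Ω → B) (h : Ω → C) :
    condMutInfo μ f g (fun ω => e (h ω)) = condMutInfo μ f g h := by
  rw [condMutInfo, condMutInfo, ent_comp_of_injective he,
    ent_comp_of_injective (e := fun x : A × C => (x.1, e x.2)) (Function.injective_id.prodMap he)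
      (fun ω => (f ω, h ω)),
    ent_comp_of_injective (e := fun x : B × C => (x.1, e x.2)) (Function.injective_id.prodMap he)
      (fun ω => (g ω, h ω)),
    ent_comp_of_injective (e := fun x : A × B × C => (x.1, x.2.1, e x.2.2))
      (Function.injective_id.prodMap (Function.injective_id.prodMap he))
      (fun ω => (f ω, g ω, h ω))]

/-- Both sides are `I((a, b); y | w)`, expanded by the chain rule in two orders. -/
lemma condMutInfo_add_condMutInfo_comm (a : Ω → A) (b : Ω → B) (y : Ω → C) (w : Ω → D) :
    condMutInfo μ a y w + condMutInfo μ b y (fun ω => (a ω, w ω))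
      = condMutInfo μ b y w + condMutInfo μ a y (fun ω => (b ω, w ω)) := by
  have hbyaw : ent μ (fun ω => (b ω, y ω, a ω, w ω)) = ent μ (fun ω => (a ω, y ω, b ω, w ω)) :=
    ent_comp_of_injective (e := fun x : A × C × B × D => (x.2.2.1, x.2.1, x.1, x.2.2.2))
      (fun _ _ hx => by simp_all [Prod.ext_iff]) (fun ω => (a ω, y ω, b ω, w ω))
  simp only [condMutInfo]
  rw [hbyaw, ent_triple_comm y a w, ent_triple_comm y b w, ent_triple_comm b a w]
  ring

/-- Both sides are `I((c, x); y)`, expanded by the chain rule in two orders. -/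
lemma mutInfo_add_condMutInfo_comm (c : Ω → A) (x : Ω → B) (y : Ω → C) :
    mutInfo μ c y + condMutInfo μ x y c = mutInfo μ x y + condMutInfo μ c y x := by
  have hxyc : ent μ (fun ω => (x ω, y ω, c ω)) = ent μ (fun ω => (c ω, y ω, x ω)) :=
    ent_comp_of_injective (e := fun t : A × C × B => (t.2.2, t.2.1, t.1))
      (fun _ _ hx => by simp_all [Prod.ext_iff]) (fun ω => (c ω, y ω, x ω))
  simp only [mutInfo, condMutInfo]
  rw [hxyc, ent_pair_comm c y, ent_pair_comm x y, ent_pair_comm x c]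
  ring

lemma condMutInfo_eq_sub_of_isMarkov (hμ : IsPmf μ) {f : Ω → A} {g : Ω → B} {h : Ω → C}
    (hm : IsMarkov μ f g h) : condMutInfo μ g h f = mutInfo μ g h - mutInfo μ f h := by
  have := mutInfo_add_condMutInfo_comm (μ := μ) f g h
  rw [condMutInfo_eq_zero_of_isMarkov hμ hm] at this
  linarith

lemma mutInfo_le_of_isMarkov (hμ : IsPmf μ) {f : Ω → A} {g : Ω → B} {h : Ω → C}
    (hm : IsMarkov μ f g h) : mutInfo μ f h ≤ mutInfo μ g h := by
  linarith [condMutInfo_eq_sub_of_isMarkov hμ hm, condMutInfo_nonneg hμ g h f]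

section MoreCapable

variable {𝒰 𝒱 𝒲 𝒳 𝒴 𝒵 : Type*} [Fintype 𝒰] [Fintype 𝒱] [Fintype 𝒲] [Fintype 𝒳] [Fintype 𝒴]
  [Fintype 𝒵] {U : Ω → 𝒰} {V : Ω → 𝒱} {W : Ω → 𝒲} {X : Ω → 𝒳} {Y : Ω → 𝒴} {Z : Ω → 𝒵}

lemma condMutInfo_sub_condMutInfo_le_of_isMarkov (hμ : IsPmf μ)
    (hm : IsMarkov μ (fun ω => (V ω, U ω, W ω)) X Z) :
    condMutInfo μ V Z W - condMutInfo μ U V W ≤ condMutInfo μ X Z (fun ω => (U ω, W ω)) := by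
  have h₁ := condMutInfo_add_condMutInfo_comm (μ := μ) Z U V W
  have h₂ := condMutInfo_add_condMutInfo_comm (μ := μ) V X Z (fun ω => (U ω, W ω))
  rw [condMutInfo_comm Z V, condMutInfo_comm Z V] at h₁
  rw [condMutInfo_eq_zero_of_isMarkov hμ (hm.weak_union hμ)] at h₂
  linarith [condMutInfo_nonneg hμ U V (fun ω => (Z ω, W ω)),
    condMutInfo_nonneg hμ X Z (fun ω => (V ω, U ω, W ω))]

lemma condMutInfo_add_condMutInfo_of_isMarkov (hμ : IsPmf μ)
    (hm : IsMarkov μ (fun ω => (U ω, W ω)) X Y) :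
    condMutInfo μ U Y W + condMutInfo μ X Y (fun ω => (U ω, W ω)) = condMutInfo μ X Y W := by
  rw [condMutInfo_add_condMutInfo_comm, condMutInfo_eq_zero_of_isMarkov hμ (hm.weak_union hμ),
    add_zero]

lemma sumRate_le_condMutInfo (hμ : IsPmf μ)
    (hm : IsMarkov μ (fun ω => (U ω, V ω, W ω)) X (fun ω => (Y ω, Z ω)))
    (hmc : condMutInfo μ X Z (fun ω => (U ω, W ω)) ≤ condMutInfo μ X Y (fun ω => (U ω, W ω))) :
    condMutInfo μ U Y W + condMutInfo μ V Z W - condMutInfo μ U V W ≤ condMutInfo μ X Y W := by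
  have hV := condMutInfo_sub_condMutInfo_le_of_isMarkov hμ
    ((hm.comp_left fun t => (t.2.1, t.1, t.2.2)).comp_right Prod.snd)
  have hU := condMutInfo_add_condMutInfo_of_isMarkov hμ
    ((hm.comp_left fun t => (t.1, t.2.2)).comp_right Prod.fst)
  linarith

lemma condMutInfo_le_of_moreCapable
    (hmc : ∀ (n : ℕ) (W' : Ω → Fin n),
      IsMarkov μ W' X (fun ω => (Y ω, Z ω)) → condMutInfo μ X Z W' ≤ condMutInfo μ X Y W')
    {a : Ω → A} (ha : IsMarkov μ a X (fun ω => (Y ω, Z ω))) :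
    condMutInfo μ X Z a ≤ condMutInfo μ X Y a := by
  let e := Fintype.equivFin A
  simpa only [condMutInfo_comp_cond_of_injective e.injective] using
    hmc _ (fun ω => e (a ω)) (ha.comp_left e)

end MoreCapable

end Entropy

section Superposition

variable {𝒳 𝒴 𝒵 : Type*} [Fintype 𝒳] [Fintype 𝒴] [Fintype 𝒵]

/-- λ-sum-rates of superposition coding with cloud centre `W'`. -/
def superpositionValues (μ : Ω → ℝ) (X : Ω → 𝒳) (Y : Ω → 𝒴) (Z : Ω → 𝒵) (l : ℝ) : Set ℝ :=
  {v : ℝ | ∃ (n : ℕ) (W' : Ω → Fin n), IsMarkov μ W' X (fun ω => (Y ω, Z ω)) ∧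
    v = l * mutInfo μ W' Y + (1 - l) * mutInfo μ W' Z + condMutInfo μ X Y W'}

def mutInfoGapValues (μ : Ω → ℝ) (X : Ω → 𝒳) (Y : Ω → 𝒴) (Z : Ω → 𝒵) : Set ℝ :=
  {v : ℝ | ∃ (n : ℕ) (W' : Ω → Fin n), IsMarkov μ W' X (fun ω => (Y ω, Z ω)) ∧
    v = mutInfo μ W' Z - mutInfo μ W' Y}

variable {X : Ω → 𝒳} {Y : Ω → 𝒴} {Z : Ω → 𝒵}

lemma superposition_eq_of_isMarkov [Fintype A] (hμ : IsPmf μ) {W : Ω → A}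
    (hW : IsMarkov μ W X (fun ω => (Y ω, Z ω))) (l : ℝ) :
    l * mutInfo μ W Y + (1 - l) * mutInfo μ W Z + condMutInfo μ X Y W
      = mutInfo μ X Y + (1 - l) * (mutInfo μ W Z - mutInfo μ W Y) := by
  rw [condMutInfo_eq_sub_of_isMarkov hμ (hW.comp_right Prod.fst)]
  ring

lemma superpositionValues_eq_image (hμ : IsPmf μ) (l : ℝ) :
    superpositionValues μ X Y Z l
      = (fun v => mutInfo μ X Y + (1 - l) * v) '' mutInfoGapValues μ X Y Z := by
  ext v
  constructor
  · rintro ⟨n, W', hW', rfl⟩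
    exact ⟨_, ⟨n, W', hW', rfl⟩, (superposition_eq_of_isMarkov hμ hW' l).symm⟩
  · rintro ⟨_, ⟨n, W', hW', rfl⟩, rfl⟩
    exact ⟨n, W', hW', (superposition_eq_of_isMarkov hμ hW' l).symm⟩

lemma bddAbove_mutInfoGapValues (hμ : IsPmf μ) : BddAbove (mutInfoGapValues μ X Y Z) := by
  refine ⟨mutInfo μ X Z, ?_⟩
  rintro _ ⟨n, W', hW', rfl⟩
  linarith [mutInfo_le_of_isMarkov hμ (hW'.comp_right Prod.snd), mutInfo_nonneg hμ W' Y]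

omit [Fintype 𝒳] in
lemma mutInfo_sub_mem_mutInfoGapValues [Fintype A] {W : Ω → A}
    (hW : IsMarkov μ W X (fun ω => (Y ω, Z ω))) :
    mutInfo μ W Z - mutInfo μ W Y ∈ mutInfoGapValues μ X Y Z := by
  let e := Fintype.equivFin A
  exact ⟨_, fun ω => e (W ω), hW.comp_left e,
    by simp only [mutInfo_comp_left_of_injective e.injective]⟩

end Superposition

end

lemma csSup_image_const_add_mul {s : Set ℝ} (a : ℝ) {c : ℝ} (hc : 0 ≤ c) (hne : s.Nonempty)
    (hbdd : BddAbove s) : sSup ((fun v => a + c * v) '' s) = a + c * sSup s :=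
  ((monotone_id.const_mul hc).const_add a).map_csSup_of_continuousAt (by fun_prop) hne hbdd
    |>.symm

/-- If `Y` is more capable than `Z` (`I(X;Z|A) ≤ I(X;Y|A)` for every auxiliary `A`
with `A → X → (Y,Z)` Markov), then the λ-sum-rate expression is at most the maximum
over auxiliaries `W'` of `λ I(W';Y) + (1−λ) I(W';Z) + I(X;Y|W')`, which equals
`I(X;Y) + (1−λ) max_{W'} (I(W';Z) − I(W';Y))`. -/
theorem stmt18 {Ω 𝒰 𝒱 𝒲 𝒳 𝒴 𝒵 : Type*} [Fintype Ω] [Fintype 𝒰] [Fintype 𝒱] [Fintype 𝒲]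
    [Fintype 𝒳] [Fintype 𝒴] [Fintype 𝒵] (μ : Ω → ℝ) (hμ : IsPmf μ)
    (U : Ω → 𝒰) (V : Ω → 𝒱) (W : Ω → 𝒲) (X : Ω → 𝒳) (Y : Ω → 𝒴) (Z : Ω → 𝒵)
    (hMarkov : IsMarkov μ (fun ω => (U ω, V ω, W ω)) X (fun ω => (Y ω, Z ω)))
    (hMoreCapable : ∀ (n : ℕ) (A : Ω → Fin n),
      IsMarkov μ A X (fun ω => (Y ω, Z ω)) → condMutInfo μ X Z A ≤ condMutInfo μ X Y A) :
    ∀ l ∈ Set.Icc (0 : ℝ) 1,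
      (l * mutInfo μ W Y + (1 - l) * mutInfo μ W Z + condMutInfo μ U Y W
          + condMutInfo μ V Z W - condMutInfo μ U V W
        ≤ sSup {v : ℝ | ∃ (n : ℕ) (W' : Ω → Fin n),
            IsMarkov μ W' X (fun ω => (Y ω, Z ω)) ∧
            v = l * mutInfo μ W' Y + (1 - l) * mutInfo μ W' Z + condMutInfo μ X Y W'}) ∧
      (sSup {v : ℝ | ∃ (n : ℕ) (W' : Ω → Fin n),
            IsMarkov μ W' X (fun ω => (Y ω, Z ω)) ∧
            v = l * mutInfo μ W' Y + (1 - l) * mutInfo μ W' Z + condMutInfo μ X Y W'}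
        = mutInfo μ X Y + (1 - l) * sSup {v : ℝ | ∃ (n : ℕ) (W' : Ω → Fin n),
            IsMarkov μ W' X (fun ω => (Y ω, Z ω)) ∧
            v = mutInfo μ W' Z - mutInfo μ W' Y}) := by
  rintro l ⟨-, hl1⟩
  have hW : IsMarkov μ W X (fun ω => (Y ω, Z ω)) := hMarkov.comp_left (·.2.2)
  have hmem := mutInfo_sub_mem_mutInfoGapValues hW
  have hbdd := bddAbove_mutInfoGapValues (X := X) (Y := Y) (Z := Z) hμ
  show _ ≤ sSup (superpositionValues μ X Y Z l) ∧
    sSup (superpositionValues μ X Y Z l) = _ + (1 - l) * sSup (mutInfoGapValues μ X Y Z)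
  rw [superpositionValues_eq_image hμ,
    csSup_image_const_add_mul _ (sub_nonneg.2 hl1) ⟨_, hmem⟩ hbdd]
  refine ⟨?_, rfl⟩
  calc _ ≤ l * mutInfo μ W Y + (1 - l) * mutInfo μ W Z + condMutInfo μ X Y W := by
        linarith [sumRate_le_condMutInfo hμ hMarkov (condMutInfo_le_of_moreCapable hMoreCapable
          (hMarkov.comp_left fun t => (t.1, t.2.2)))]
    _ = mutInfo μ X Y + (1 - l) * (mutInfo μ W Z - mutInfo μ W Y) :=
        superposition_eq_of_isMarkov hμ hW l
    _ ≤ mutInfo μ X Y + (1 - l) * sSup (mutInfoGapValues μ X Y Z) := by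
        gcongr
        exact le_csSup hbdd hmem

end
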